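/- For any b ∈ R, the five points (0:1:0), (1 : (−3b²−10b−7)/(2(b+3)) : (b²+4b+5)/2) (assuming b ≠ −3), (1:0:1), (2:1:1), (3:3:1) all satisfy f(X,Y,Z) = (b−1)X² + 2XY − (b−7)XZ − 2(b+4)YZ − 6Z² = 0. -/
import Mathlib


/-- For any `b ∈ ℝ` (with `b ≠ −3` so that `p₁` is defined), the five points
`(0:1:0)`, `p₁`, `(1:0:1)`, `(2:1:1)`, `(3:3:1)` all satisfy
`f(X,Y,Z) = (b−1)X² + 2XY − (b−7)XZ − 2(b+4)YZ − 6Z² = 0`. -/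
theorem five_points_on_conic (b : ℝ) (hb : b ≠ -3) :
    let f : ℝ → ℝ → ℝ → ℝ := fun X Y Z =>
      (b - 1) * X^2 + 2 * X * Y - (b - 7) * X * Z - 2 * (b + 4) * Y * Z - 6 * Z^2
    f 0 1 0 = 0 ∧
    f 1 ((-3 * b^2 - 10 * b - 7) / (2 * (b + 3))) ((b^2 + 4 * b + 5) / 2) = 0 ∧
    f 1 0 1 = 0 ∧ f 2 1 1 = 0 ∧ f 3 3 1 = 0 := by
  have h : (b + 3) ≠ 0 := by intro h; apply hb; linarith
  refine ⟨by ring, ?_, by ring, by ring, by ring⟩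
  field_simp
  ring
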